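/- Let p be an odd prime and consider the permutations of ℤ_{2p} × ℤ_4 given by μ(i,j) = (i+1,j), σν(i,j) = (-i,j+1), and τ(i,j) = (-i,-j), and let H = ⟨μ, σν, τ⟩, a subgroup of the symmetric group on ℤ_{2p} × ℤ_4. Then the minimal normal subgroups of H are exactly ⟨μ²⟩, ⟨μ^p⟩, ⟨ν²⟩, and ⟨μ^p ν²⟩, where μ² is the permutation (i,j) ↦ (i+2,j), μ^p is (i,j) ↦ (i+p,j), ν² is (i,j) ↦ (i,j+2), and μ^p ν² is (i,j) ↦ (i+p,j+2). -/

import Mathlib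

open SimpleGraph

namespace OG4

variable {V : Type*} {W : Type*}

/-! ### Normal quotients, cycles, and basic pairs -/

/-- The setoid of orbits of a group `N` of permutations of `V`. -/
def orbitSetoid (N : Subgroup (Equiv.Perm V)) : Setoid V := MulAction.orbitRel N V

/-- The (normal) quotient graph of a graph `Γ` with respect to a group `N` of permutations:
its vertices are the `N`-orbits, two distinct orbits being adjacent iff some vertex of one is
adjacent in `Γ` to some vertex of the other. -/
def quotientGraph (Γ : SimpleGraph V) (N : Subgroup (Equiv.Perm V)) :
    SimpleGraph (Quotient (orbitSetoid N)) :=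
  SimpleGraph.fromRel fun a b =>
    ∃ x y : V, Quotient.mk (orbitSetoid N) x = a ∧ Quotient.mk (orbitSetoid N) y = b ∧ Γ.Adj x y

/-- `N` is a normal subgroup of the subgroup `G` (of some ambient group). -/
def NormalIn {G : Type*} [Group G] (N H : Subgroup G) : Prop :=
  N ≤ H ∧ ∀ h ∈ H, ∀ n ∈ N, h * n * h⁻¹ ∈ N

/-- A graph is isomorphic to a cycle graph `C_m` for some `m ≥ 3`. -/
def IsoCycle (Δ : SimpleGraph W) : Prop :=
  ∃ m : ℕ, 3 ≤ m ∧ Nonempty (Δ ≃g SimpleGraph.cycleGraph m)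

/-- Every normal quotient of `(Γ, G)` relative to a nontrivial normal subgroup is degenerate:
it has at most 2 vertices or is a cycle. -/
def IsBasic (Γ : SimpleGraph V) (G : Subgroup (Equiv.Perm V)) : Prop :=
  ∀ N : Subgroup (Equiv.Perm V), NormalIn N G → N ≠ ⊥ →
    Nat.card (Quotient (orbitSetoid N)) ≤ 2 ∨ IsoCycle (quotientGraph Γ N)

/-- `(Γ, G)` is basic of cycle type. -/
def BasicOfCycleType (Γ : SimpleGraph V) (G : Subgroup (Equiv.Perm V)) : Prop :=
  IsBasic Γ G ∧
    ∃ N : Subgroup (Equiv.Perm V), NormalIn N G ∧ N ≠ ⊥ ∧ IsoCycle (quotientGraph Γ N)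

/-- The kernel of the action of `G` on the set of `N`-orbits. -/
def orbitKernel (G N : Subgroup (Equiv.Perm V)) : Subgroup (Equiv.Perm V) where
  carrier := {g | g ∈ G ∧ ∀ x : V,
    Quotient.mk (orbitSetoid N) (g x) = Quotient.mk (orbitSetoid N) x}
  one_mem' := ⟨G.one_mem, fun x => by simp⟩
  mul_mem' := by
    rintro a b ⟨haG, ha⟩ ⟨hbG, hb⟩
    refine ⟨G.mul_mem haG hbG, fun x => ?_⟩
    rw [Equiv.Perm.mul_apply, ha (b x), hb x]
  inv_mem' := by
    rintro a ⟨haG, ha⟩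
    refine ⟨G.inv_mem haG, fun x => ?_⟩
    have h := ha (a⁻¹ x)
    rw [show a (a⁻¹ x) = x from a.apply_symm_apply x] at h
    exact h.symm

/-- `(Γ, G)` has a pair of independent cyclic normal quotients. -/
def HasIndepCyclicQuotients (Γ : SimpleGraph V) (G : Subgroup (Equiv.Perm V)) : Prop :=
  ∃ N M : Subgroup (Equiv.Perm V), NormalIn N G ∧ NormalIn M G ∧
    IsoCycle (quotientGraph Γ N) ∧ IsoCycle (quotientGraph Γ M) ∧
    ¬ IsoCycle (quotientGraph Γ (orbitKernel G N ⊓ orbitKernel G M))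

/-- `(Γ, G)` is basic of independent-cycle type. -/
def BasicOfIndependentCycleType (Γ : SimpleGraph V) (G : Subgroup (Equiv.Perm V)) : Prop :=
  IsBasic Γ G ∧ HasIndepCyclicQuotients Γ G

/-- Isomorphism of graph-group pairs: a graph isomorphism conjugating one group onto the other. -/
def PairIso (Γ : SimpleGraph V) (G : Subgroup (Equiv.Perm V))
    (Δ : SimpleGraph W) (H : Subgroup (Equiv.Perm W)) : Prop :=
  ∃ e : Γ ≃g Δ, ∀ h : Equiv.Perm W, h ∈ H ↔ ∃ g ∈ G, e.toEquiv.permCongr g = h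

/-! ### Minimal normal subgroups -/

/-- `M` is a minimal normal subgroup of the ambient group. -/
def IsMinimalNormal {G : Type*} [Group G] (M : Subgroup G) : Prop :=
  M.Normal ∧ M ≠ ⊥ ∧ ∀ N : Subgroup G, N.Normal → N ≤ M → N = ⊥ ∨ N = M

/-- `M` is a minimal normal subgroup of the subgroup `H`. -/
def IsMinimalNormalIn {G : Type*} [Group G] (M H : Subgroup G) : Prop :=
  NormalIn M H ∧ M ≠ ⊥ ∧ ∀ N : Subgroup G, NormalIn N H → N ≤ M → N = ⊥ ∨ N = M

/-! ### The graphs `Γ(r,s)` and their automorphisms -/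

/-- In `Γ(r,s)`, the vertex `(i,j)` is joined to the four vertices `(i ± 1, j ± 1)`. -/
def gammaRel (r s : ℕ) (x y : ZMod r × ZMod s) : Prop :=
  (y.1 = x.1 + 1 ∨ y.1 = x.1 - 1) ∧ (y.2 = x.2 + 1 ∨ y.2 = x.2 - 1)

/-- The graph `Γ(r,s)` on `ℤ_r × ℤ_s`. -/
def Gamma (r s : ℕ) : SimpleGraph (ZMod r × ZMod s) := SimpleGraph.fromRel (gammaRel r s)

/-- `μ : (i,j) ↦ (i+1, j)`. -/
def mu (r s : ℕ) : Equiv.Perm (ZMod r × ZMod s) :=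
  (Equiv.addRight (1 : ZMod r)).prodCongr (Equiv.refl (ZMod s))

/-- `ν : (i,j) ↦ (i, j+1)`. -/
def nu (r s : ℕ) : Equiv.Perm (ZMod r × ZMod s) :=
  (Equiv.refl (ZMod r)).prodCongr (Equiv.addRight (1 : ZMod s))

/-- `σ : (i,j) ↦ (-i, j)`. -/
def sigma (r s : ℕ) : Equiv.Perm (ZMod r × ZMod s) :=
  (Equiv.neg (ZMod r)).prodCongr (Equiv.refl (ZMod s))

/-- `τ : (i,j) ↦ (-i, -j)`. -/
def tau (r s : ℕ) : Equiv.Perm (ZMod r × ZMod s) :=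
  (Equiv.neg (ZMod r)).prodCongr (Equiv.neg (ZMod s))

/-- `σν : (i,j) ↦ (-i, j+1)`. -/
def sigmaNu (r s : ℕ) : Equiv.Perm (ZMod r × ZMod s) :=
  (Equiv.neg (ZMod r)).prodCongr (Equiv.addRight (1 : ZMod s))

/-- `μν : (i,j) ↦ (i+1, j+1)`. -/
def muNu (r s : ℕ) : Equiv.Perm (ZMod r × ZMod s) :=
  (Equiv.addRight (1 : ZMod r)).prodCongr (Equiv.addRight (1 : ZMod s))

/-- `σμν : (i,j) ↦ (-(i+1), j+1)`. -/
def sigmaMuNu (r s : ℕ) : Equiv.Perm (ZMod r × ZMod s) :=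
  ((Equiv.addRight (1 : ZMod r)).trans (Equiv.neg (ZMod r))).prodCongr
    (Equiv.addRight (1 : ZMod s))

/-- `μ² : (i,j) ↦ (i+2, j)`. -/
def muSq (r s : ℕ) : Equiv.Perm (ZMod r × ZMod s) :=
  (Equiv.addRight (2 : ZMod r)).prodCongr (Equiv.refl (ZMod s))

/-- `ν² : (i,j) ↦ (i, j+2)`. -/
def nuSq (r s : ℕ) : Equiv.Perm (ZMod r × ZMod s) :=
  (Equiv.refl (ZMod r)).prodCongr (Equiv.addRight (2 : ZMod s))

/-- `μ^k : (i,j) ↦ (i+k, j)`. -/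
def muPow (r s k : ℕ) : Equiv.Perm (ZMod r × ZMod s) :=
  (Equiv.addRight ((k : ZMod r))).prodCongr (Equiv.refl (ZMod s))

/-- `μ^k ν² : (i,j) ↦ (i+k, j+2)`. -/
def muPowNuSq (r s k : ℕ) : Equiv.Perm (ZMod r × ZMod s) :=
  (Equiv.addRight ((k : ZMod r))).prodCongr (Equiv.addRight (2 : ZMod s))

/-- `G(r,s) = ⟨μ, ν, σ⟩`. -/
def Ggroup (r s : ℕ) : Subgroup (Equiv.Perm (ZMod r × ZMod s)) :=
  Subgroup.closure {mu r s, nu r s, sigma r s}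

/-- `H(r,s) = ⟨μ, σν, τ⟩`. -/
def Hgroup (r s : ℕ) : Subgroup (Equiv.Perm (ZMod r × ZMod s)) :=
  Subgroup.closure {mu r s, sigmaNu r s, tau r s}

/-! ### The graphs `Γ⁺(r,s)` (for `r`, `s` even) -/

/-- `X⁺`: the set of `(i,j)` with `i` and `j` of the same parity. -/
def XPlus (r s : ℕ) : Set (ZMod r × ZMod s) := {x | x.1.val % 2 = x.2.val % 2}

/-- `Γ⁺(r,s)`, the subgraph of `Γ(r,s)` induced on `X⁺`. -/
def GammaPlus (r s : ℕ) : SimpleGraph (XPlus r s) :=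
  SimpleGraph.induce (XPlus r s) (Gamma r s)

section parity

lemma val_add_one_mod_two (r : ℕ) (hr : 2 ∣ r) (hr0 : r ≠ 0) (i : ZMod r) :
    (i + 1).val % 2 = (i.val + 1) % 2 := by
  haveI : NeZero r := ⟨hr0⟩
  haveI : Fact (1 < r) := ⟨by have := Nat.le_of_dvd (Nat.pos_of_ne_zero hr0) hr; omega⟩
  rw [ZMod.val_add, Nat.mod_mod_of_dvd _ hr, ZMod.val_one]

lemma val_add_two_mod_two (r : ℕ) (hr : 2 ∣ r) (hr0 : r ≠ 0) (i : ZMod r) :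
    (i + 2).val % 2 = i.val % 2 := by
  have h1 := val_add_one_mod_two r hr hr0 i
  have h2 := val_add_one_mod_two r hr hr0 (i + 1)
  rw [show i + 1 + 1 = i + 2 by ring] at h2
  omega

lemma val_neg_mod_two (r : ℕ) (hr : 2 ∣ r) (hr0 : r ≠ 0) (i : ZMod r) :
    (-i).val % 2 = i.val % 2 := by
  haveI : NeZero r := ⟨hr0⟩
  rcases eq_or_ne i 0 with h | h
  · simp [h]
  · have h1 : (-i).val = r - i.val := by rw [ZMod.neg_val]; simp [h]
    have h2 : i.val < r := ZMod.val_lt i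
    have h3 : i.val ≠ 0 := fun hh => h ((ZMod.val_eq_zero i).mp hh)
    obtain ⟨t, rfl⟩ := hr
    rw [h1]
    omega

end parity

section plusPerms

variable (r s : ℕ)

/-- The restriction of `μ²` to `X⁺`. -/
def muSqP (hr : 2 ∣ r) (hr0 : r ≠ 0) : Equiv.Perm (XPlus r s) :=
  (muSq r s).subtypePerm (by
    intro x
    have h := val_add_two_mod_two r hr hr0 x.1
    simp only [XPlus, Set.mem_setOf_eq, muSq, Equiv.prodCongr_apply, Prod.map,
      Equiv.coe_addRight, Equiv.refl_apply]
    omega)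

/-- The restriction of `ν²` to `X⁺`. -/
def nuSqP (hs : 2 ∣ s) (hs0 : s ≠ 0) : Equiv.Perm (XPlus r s) :=
  (nuSq r s).subtypePerm (by
    intro x
    have h := val_add_two_mod_two s hs hs0 x.2
    simp only [XPlus, Set.mem_setOf_eq, nuSq, Equiv.prodCongr_apply, Prod.map,
      Equiv.coe_addRight, Equiv.refl_apply]
    omega)

/-- The restriction of `μν` to `X⁺`. -/
def muNuP (hr : 2 ∣ r) (hr0 : r ≠ 0) (hs : 2 ∣ s) (hs0 : s ≠ 0) : Equiv.Perm (XPlus r s) :=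
  (muNu r s).subtypePerm (by
    intro x
    have h1 := val_add_one_mod_two r hr hr0 x.1
    have h2 := val_add_one_mod_two s hs hs0 x.2
    simp only [XPlus, Set.mem_setOf_eq, muNu, Equiv.prodCongr_apply, Prod.map,
      Equiv.coe_addRight]
    omega)

/-- The restriction of `σ` to `X⁺`. -/
def sigmaP (hr : 2 ∣ r) (hr0 : r ≠ 0) : Equiv.Perm (XPlus r s) :=
  (sigma r s).subtypePerm (by
    intro x
    have h := val_neg_mod_two r hr hr0 x.1
    simp only [XPlus, Set.mem_setOf_eq, sigma, Equiv.prodCongr_apply, Prod.map,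
      Equiv.neg_apply, Equiv.refl_apply]
    omega)

/-- The restriction of `τ` to `X⁺`. -/
def tauP (hr : 2 ∣ r) (hr0 : r ≠ 0) (hs : 2 ∣ s) (hs0 : s ≠ 0) : Equiv.Perm (XPlus r s) :=
  (tau r s).subtypePerm (by
    intro x
    have h1 := val_neg_mod_two r hr hr0 x.1
    have h2 := val_neg_mod_two s hs hs0 x.2
    simp only [XPlus, Set.mem_setOf_eq, tau, Equiv.prodCongr_apply, Prod.map,
      Equiv.neg_apply]
    omega)

/-- The restriction of `σμν` to `X⁺`. -/
def sigmaMuNuP (hr : 2 ∣ r) (hr0 : r ≠ 0) (hs : 2 ∣ s) (hs0 : s ≠ 0) :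
    Equiv.Perm (XPlus r s) :=
  (sigmaMuNu r s).subtypePerm (by
    intro x
    have h1 := val_neg_mod_two r hr hr0 (x.1 + 1)
    have h2 := val_add_one_mod_two r hr hr0 x.1
    have h3 := val_add_one_mod_two s hs hs0 x.2
    simp only [XPlus, Set.mem_setOf_eq, sigmaMuNu, Equiv.prodCongr_apply, Prod.map,
      Equiv.trans_apply, Equiv.coe_addRight, Equiv.neg_apply]
    omega)

/-- `G⁺(r,s) = ⟨μ², μν, σ⟩` acting on `X⁺`. -/
def GPlusGroup (hr : 2 ∣ r) (hr0 : r ≠ 0) (hs : 2 ∣ s) (hs0 : s ≠ 0) :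
    Subgroup (Equiv.Perm (XPlus r s)) :=
  Subgroup.closure {muSqP r s hr hr0, muNuP r s hr hr0 hs hs0, sigmaP r s hr hr0}

/-- `H⁺(r,s) = ⟨μ², σμν, τ⟩` acting on `X⁺`. -/
def HPlusGroup (hr : 2 ∣ r) (hr0 : r ≠ 0) (hs : 2 ∣ s) (hs0 : s ≠ 0) :
    Subgroup (Equiv.Perm (XPlus r s)) :=
  Subgroup.closure
    {muSqP r s hr hr0, sigmaMuNuP r s hr hr0 hs hs0, tauP r s hr hr0 hs hs0}

end plusPerms

/-! ### The standard double cover `Γ₂(r,s)` -/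

/-- Adjacency of the double cover: `(i,j)_δ ~ (i ± 1, j ± 1)_{δ+1}`. -/
def gamma2Rel (r s : ℕ) (x y : (ZMod r × ZMod s) × ZMod 2) : Prop :=
  (y.1.1 = x.1.1 + 1 ∨ y.1.1 = x.1.1 - 1) ∧ (y.1.2 = x.1.2 + 1 ∨ y.1.2 = x.1.2 - 1) ∧
    y.2 = x.2 + 1

/-- `Γ₂(r,s)`, the standard double cover of `Γ(r,s)`. -/
def Gamma2 (r s : ℕ) : SimpleGraph ((ZMod r × ZMod s) × ZMod 2) :=
  SimpleGraph.fromRel (gamma2Rel r s)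

/-- `μ : (i,j)_δ ↦ (i+1, j)_δ` on the double cover. -/
def muD (r s : ℕ) : Equiv.Perm ((ZMod r × ZMod s) × ZMod 2) :=
  (mu r s).prodCongr (Equiv.refl (ZMod 2))

/-- `ν : (i,j)_δ ↦ (i, j+1)_δ` on the double cover. -/
def nuD (r s : ℕ) : Equiv.Perm ((ZMod r × ZMod s) × ZMod 2) :=
  (nu r s).prodCongr (Equiv.refl (ZMod 2))

/-- `σ : (i,j)_δ ↦ (i, -j)_{δ+1}` on the double cover. -/
def sigmaD (r s : ℕ) : Equiv.Perm ((ZMod r × ZMod s) × ZMod 2) :=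
  ((Equiv.refl (ZMod r)).prodCongr (Equiv.neg (ZMod s))).prodCongr
    (Equiv.addRight (1 : ZMod 2))

/-- `τ : (i,j)_δ ↦ (-i, -j)_δ` on the double cover. -/
def tauD (r s : ℕ) : Equiv.Perm ((ZMod r × ZMod s) × ZMod 2) :=
  (tau r s).prodCongr (Equiv.refl (ZMod 2))

/-- `G₂(r,s) = ⟨μ, ν, σ, τ⟩` on the double cover. -/
def G2group (r s : ℕ) : Subgroup (Equiv.Perm ((ZMod r × ZMod s) × ZMod 2)) :=
  Subgroup.closure {muD r s, nuD r s, sigmaD r s, tauD r s}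

/-!
Every element of `H` is an affine map `(i, j) ↦ (±i + a, ±j + b)`. A nontrivial normal subgroup
`N` of `H` therefore contains a nontrivial translation: either one of its elements already is
one, or its commutator with `μ` (if it negates `i`) or with `σν` (if it negates `j`) is. Squares
and multiples of a nontrivial translation `(a, b)` reach `μ²`, `μ^p`, `ν²` or `μ^p ν²` (Bézout in
`ℤ_{2p}`). Each of these four is a translation `(a, b)` with `-b = b`, hence centralised or
inverted by every affine map, so it generates a normal subgroup; and it has prime order (`p` or
`2`), so that subgroup is minimal.
-/

section MinimalNormal

variable {G : Type*} [Group G] {H M : Subgroup G} {x : G}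

lemma NormalIn.commutator_mem {N : Subgroup G} (hN : NormalIn N H) {n g : G} (hn : n ∈ N)
    (hg : g ∈ H) : n * g * n⁻¹ * g⁻¹ ∈ N := by
  simpa only [mul_assoc] using mul_mem hn (hN.2 g hg n⁻¹ (inv_mem hn))

lemma normalIn_closure_singleton (hx : x ∈ H)
    (hconj : ∀ g ∈ H, g * x * g⁻¹ = x ∨ g * x * g⁻¹ = x⁻¹) :
    NormalIn (Subgroup.closure {x}) H := by
  refine ⟨(Subgroup.closure_le H).mpr (Set.singleton_subset_iff.mpr hx), ?_⟩
  intro g hg n hn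
  rw [← Subgroup.zpowers_eq_closure] at hn ⊢
  obtain ⟨k, rfl⟩ := Subgroup.mem_zpowers_iff.mp hn
  rw [← conj_zpow]
  rcases hconj g hg with h | h <;> rw [h]
  · exact Subgroup.zpow_mem _ (Subgroup.mem_zpowers x) k
  · exact Subgroup.zpow_mem _ (inv_mem (Subgroup.mem_zpowers x)) k

lemma eq_bot_or_eq_zpowers_of_orderOf_prime (hx : (orderOf x).Prime) {N : Subgroup G}
    (hN : N ≤ Subgroup.zpowers x) : N = ⊥ ∨ N = Subgroup.zpowers x := by
  have : Finite (Subgroup.zpowers x) :=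
    Nat.finite_of_card_ne_zero (by rw [Nat.card_zpowers]; exact hx.ne_zero)
  have hdvd := Subgroup.card_dvd_of_le hN
  rw [Nat.card_zpowers] at hdvd
  rcases hx.eq_one_or_self_of_dvd _ hdvd with h | h
  · exact Or.inl (Subgroup.card_eq_one.mp h)
  · exact Or.inr (Subgroup.eq_of_le_of_card_ge hN (by rw [Nat.card_zpowers, h]))

lemma isMinimalNormalIn_closure_singleton (hx : (orderOf x).Prime)
    (hN : NormalIn (Subgroup.closure {x}) H) : IsMinimalNormalIn (Subgroup.closure {x}) H := by
  rw [← Subgroup.zpowers_eq_closure] at hN ⊢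
  refine ⟨hN, ?_, fun N _ hle => eq_bot_or_eq_zpowers_of_orderOf_prime hx hle⟩
  rw [Ne, Subgroup.zpowers_eq_bot, ← orderOf_eq_one_iff]
  exact hx.ne_one

lemma IsMinimalNormalIn.eq_closure_singleton (hM : IsMinimalNormalIn M H) (hxM : x ∈ M)
    (hx : x ≠ 1) (hN : NormalIn (Subgroup.closure {x}) H) : M = Subgroup.closure {x} := by
  have hle : Subgroup.closure {x} ≤ M := (Subgroup.closure_le M).mpr (by simpa using hxM)
  rcases hM.2.2 _ hN hle with h | h
  · exact absurd (h ▸ Subgroup.subset_closure rfl : x ∈ (⊥ : Subgroup G)) hx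
  · exact h.symm

end MinimalNormal

section Affine

variable {A B : Type*} [AddCommGroup A] [AddCommGroup B]

def affine (ε δ : ℤˣ) (a : A) (b : B) : Equiv.Perm (A × B) :=
  ((MulAction.toPerm ε).trans (Equiv.addRight a)).prodCongr
    ((MulAction.toPerm δ).trans (Equiv.addRight b))

@[simp]
lemma affine_apply (ε δ : ℤˣ) (a : A) (b : B) (x : A × B) :
    affine ε δ a b x = (ε • x.1 + a, δ • x.2 + b) := rfl

lemma affine_mul (ε δ ε' δ' : ℤˣ) (a a' : A) (b b' : B) :
    affine ε δ a b * affine ε' δ' a' b' = affine (ε * ε') (δ * δ') (ε • a' + a) (δ • b' + b) := by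
  ext x <;> simp [mul_smul, smul_add, add_assoc]

lemma affine_inv (ε δ : ℤˣ) (a : A) (b : B) :
    (affine ε δ a b)⁻¹ = affine ε δ (-(ε • a)) (-(δ • b)) := by
  refine inv_eq_of_mul_eq_one_right ?_
  ext x <;> simp [affine_mul, smul_neg, smul_smul, Int.units_mul_self]

lemma affine_one_one_pow (a : A) (b : B) (n : ℕ) :
    affine 1 1 a b ^ n = affine 1 1 (n • a) (n • b) := by
  induction n with
  | zero => ext x <;> simp
  | succ n ih => rw [pow_succ', ih, affine_mul]; simp [succ_nsmul]

lemma affine_one_one_eq_one_iff {a : A} {b : B} : affine 1 1 a b = 1 ↔ a = 0 ∧ b = 0 := by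
  refine ⟨fun h => ?_, fun ⟨ha, hb⟩ => by ext x <;> simp [ha, hb]⟩
  simpa using DFunLike.congr_fun h 0

lemma orderOf_affine_one_one_eq_prime {q : ℕ} (hq : q.Prime) {a : A} {b : B} (ha : q • a = 0)
    (hb : q • b = 0) (hab : a ≠ 0 ∨ b ≠ 0) : orderOf (affine 1 1 a b) = q := by
  have : Fact q.Prime := ⟨hq⟩
  refine orderOf_eq_prime ?_ ?_
  · rw [affine_one_one_pow, ha, hb, affine_one_one_eq_one_iff]
    exact ⟨rfl, rfl⟩
  · rw [Ne, affine_one_one_eq_one_iff]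
    tauto

lemma affine_conj_affine_one_one (ε δ : ℤˣ) (c : A) (d : B) (a : A) (b : B) :
    affine ε δ c d * affine 1 1 a b * (affine ε δ c d)⁻¹ = affine 1 1 (ε • a) (δ • b) := by
  rw [mul_inv_eq_iff_eq_mul]
  ext x <;> simp [smul_add] <;> abel

/-- Since all linear parts are `±1`, they commute, and the commutator is a translation. -/
lemma affine_commutator (ε δ ε' δ' : ℤˣ) (a c : A) (b d : B) :
    affine ε δ a b * affine ε' δ' c d * (affine ε δ a b)⁻¹ * (affine ε' δ' c d)⁻¹ =
      affine 1 1 (a - ε' • a - (c - ε • c)) (b - δ' • b - (d - δ • d)) := by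
  rw [mul_inv_eq_iff_eq_mul, mul_inv_eq_iff_eq_mul]
  ext x <;> simp [smul_add, smul_smul, mul_comm ε ε', mul_comm δ δ'] <;> abel

variable (A B) in
def affineSubgroup : Subgroup (Equiv.Perm (A × B)) where
  carrier := {g | ∃ ε δ a b, g = affine ε δ a b}
  one_mem' := ⟨1, 1, 0, 0, by ext x <;> simp⟩
  mul_mem' := by
    rintro _ _ ⟨ε, δ, a, b, rfl⟩ ⟨ε', δ', a', b', rfl⟩
    exact ⟨_, _, _, _, affine_mul ε δ ε' δ' a a' b b'⟩
  inv_mem' := by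
    rintro _ ⟨ε, δ, a, b, rfl⟩
    exact ⟨_, _, _, _, affine_inv ε δ a b⟩

lemma conj_affine_one_one_eq_or_eq_inv {g : Equiv.Perm (A × B)} (hg : g ∈ affineSubgroup A B)
    {a : A} {b : B} (hb : -b = b) :
    g * affine 1 1 a b * g⁻¹ = affine 1 1 a b ∨ g * affine 1 1 a b * g⁻¹ = (affine 1 1 a b)⁻¹ := by
  obtain ⟨ε, δ, c, d, rfl⟩ := hg
  rw [affine_conj_affine_one_one, affine_inv]
  rcases Int.units_eq_one_or ε with rfl | rfl <;> rcases Int.units_eq_one_or δ with rfl | rfl <;>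
    simp [hb]

end Affine

section ZModTwoMul

variable {p : ℕ}

lemma ZMod.exists_nsmul_eq_two_or_eq_prime (hp : p.Prime) {a : ZMod (2 * p)} (ha : a ≠ 0) :
    ∃ u : ℕ, u • a = 2 ∨ u • a = p := by
  have : NeZero (2 * p) := ⟨mul_ne_zero two_ne_zero hp.ne_zero⟩
  have hgcd : a⁻¹.val • a = (Nat.gcd a.val (2 * p) : ZMod (2 * p)) := by
    rw [nsmul_eq_mul, ZMod.natCast_zmod_val, mul_comm a⁻¹, ZMod.mul_inv_eq_gcd]
  obtain ⟨d₁, d₂, h₁, h₂, hd⟩ := Nat.dvd_mul.mp (Nat.gcd_dvd_right a.val (2 * p))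
  rw [← hd] at hgcd
  rcases (Nat.dvd_prime Nat.prime_two).mp h₁ with rfl | rfl <;>
    rcases (Nat.dvd_prime hp).mp h₂ with h₂ | h₂ <;> subst d₂
  · exact ⟨2 * a⁻¹.val, Or.inl (by rw [mul_nsmul', hgcd]; norm_num)⟩
  · exact ⟨a⁻¹.val, Or.inr (by rw [hgcd]; simp)⟩
  · exact ⟨a⁻¹.val, Or.inl (by rw [hgcd]; simp)⟩
  · have hdvd : 2 * p ∣ a.val := (dvd_of_eq hd).trans (Nat.gcd_dvd_left _ _)
    exact absurd (Nat.eq_zero_of_dvd_of_lt hdvd (ZMod.val_lt a)) (by simpa using ha)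

lemma ZMod.eq_zero_or_eq_of_add_self_eq_zero [NeZero p] {a : ZMod (2 * p)} (h : a + a = 0) :
    a = 0 ∨ a = p := by
  rw [← ZMod.natCast_zmod_val a, ← Nat.cast_add, ZMod.natCast_eq_zero_iff] at h
  obtain ⟨c, hc⟩ := h
  have hc2 : c < 2 := by
    by_contra! hc2
    have := ZMod.val_lt a
    nlinarith
  rw [← ZMod.natCast_zmod_val a]
  interval_cases c
  · left; simp [show a.val = 0 by omega]
  · right; rw [show a.val = p by omega]

lemma ZMod.two_ne_zero_of_prime (hp : p.Prime) : (2 : ZMod (2 * p)) ≠ 0 := by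
  have := hp.two_le
  exact_mod_cast fun h : ((2 : ℕ) : ZMod (2 * p)) = 0 =>
    absurd (Nat.le_of_dvd two_pos ((ZMod.natCast_eq_zero_iff _ _).mp h)) (by omega)

lemma ZMod.natCast_ne_zero_of_prime (hp : p.Prime) : (p : ZMod (2 * p)) ≠ 0 := fun h =>
  absurd (Nat.le_of_dvd hp.pos ((ZMod.natCast_eq_zero_iff _ _).mp h)) (by have := hp.pos; omega)

lemma ZMod.prime_nsmul_two : p • (2 : ZMod (2 * p)) = 0 := by
  rw [nsmul_eq_mul, mul_comm (p : ZMod (2 * p))]; exact_mod_cast ZMod.natCast_self (2 * p)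

lemma ZMod.two_nsmul_prime : 2 • (p : ZMod (2 * p)) = 0 := by
  rw [nsmul_eq_mul]; exact_mod_cast ZMod.natCast_self (2 * p)

end ZModTwoMul

section Hgroup

variable {r s : ℕ}

lemma mu_eq_affine : mu r s = affine 1 1 1 0 := by ext x <;> simp [mu]

lemma sigmaNu_eq_affine : sigmaNu r s = affine (-1) 1 0 1 := by ext x <;> simp [sigmaNu]

lemma tau_eq_affine : tau r s = affine (-1) (-1) 0 0 := by ext x <;> simp [tau]

lemma muSq_eq_affine : muSq r s = affine 1 1 2 0 := by ext x <;> simp [muSq]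

lemma nuSq_eq_affine : nuSq r s = affine 1 1 0 2 := by ext x <;> simp [nuSq]

lemma muPow_eq_affine (k : ℕ) : muPow r s k = affine 1 1 (k : ZMod r) 0 := by
  ext x <;> simp [muPow]

lemma muPowNuSq_eq_affine (k : ℕ) : muPowNuSq r s k = affine 1 1 (k : ZMod r) 2 := by
  ext x <;> simp [muPowNuSq]

lemma Hgroup_le_affineSubgroup : Hgroup r s ≤ affineSubgroup (ZMod r) (ZMod s) := by
  rw [Hgroup, Subgroup.closure_le]
  rintro g (rfl | rfl | rfl)
  · exact ⟨_, _, _, _, mu_eq_affine⟩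
  · exact ⟨_, _, _, _, sigmaNu_eq_affine⟩
  · exact ⟨_, _, _, _, tau_eq_affine⟩

lemma mu_mem_Hgroup : mu r s ∈ Hgroup r s := Subgroup.subset_closure (by simp)

lemma sigmaNu_mem_Hgroup : sigmaNu r s ∈ Hgroup r s := Subgroup.subset_closure (by simp)

lemma muPow_mem_Hgroup (k : ℕ) : muPow r s k ∈ Hgroup r s := by
  have h := pow_mem (mu_mem_Hgroup (r := r) (s := s)) k
  rwa [mu_eq_affine, affine_one_one_pow, nsmul_one, nsmul_zero, ← muPow_eq_affine] at h

lemma muSq_mem_Hgroup : muSq r s ∈ Hgroup r s := by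
  simpa [muPow_eq_affine, muSq_eq_affine] using muPow_mem_Hgroup (r := r) (s := s) 2

lemma nuSq_mem_Hgroup : nuSq r s ∈ Hgroup r s := by
  have : nuSq r s = sigmaNu r s * sigmaNu r s := by
    rw [nuSq_eq_affine, sigmaNu_eq_affine, affine_mul]
    simp [one_add_one_eq_two]
  rw [this]
  exact mul_mem sigmaNu_mem_Hgroup sigmaNu_mem_Hgroup

lemma muPowNuSq_mem_Hgroup (k : ℕ) : muPowNuSq r s k ∈ Hgroup r s := by
  have : muPowNuSq r s k = muPow r s k * nuSq r s := by
    simp [muPowNuSq_eq_affine, muPow_eq_affine, nuSq_eq_affine, affine_mul]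
  rw [this]
  exact mul_mem (muPow_mem_Hgroup k) nuSq_mem_Hgroup

lemma exists_affine_one_one_mem_of_normalIn (h2r : (2 : ZMod r) ≠ 0) (h2s : (2 : ZMod s) ≠ 0)
    {N : Subgroup (Equiv.Perm (ZMod r × ZMod s))} (hN : NormalIn N (Hgroup r s)) (hbot : N ≠ ⊥) :
    ∃ a b, (a ≠ 0 ∨ b ≠ 0) ∧ affine 1 1 a b ∈ N := by
  obtain ⟨n, hnN, hn1⟩ := N.bot_or_exists_ne_one.resolve_left hbot
  obtain ⟨ε, δ, a, b, rfl⟩ := Hgroup_le_affineSubgroup (hN.1 hnN)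
  rcases Int.units_eq_one_or ε with rfl | rfl
  · rcases Int.units_eq_one_or δ with rfl | rfl
    · exact ⟨a, b, by simpa [affine_one_one_eq_one_iff, or_iff_not_imp_left] using hn1, hnN⟩
    · refine ⟨a + a, -2, Or.inr (neg_ne_zero.mpr h2s), ?_⟩
      convert hN.commutator_mem hnN sigmaNu_mem_Hgroup using 1
      rw [sigmaNu_eq_affine, affine_commutator]
      congr 1 <;> norm_num
  · refine ⟨-2, 0, Or.inl (neg_ne_zero.mpr h2r), ?_⟩
    convert hN.commutator_mem hnN mu_mem_Hgroup using 1
    rw [mu_eq_affine, affine_commutator]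
    congr 1 <;> norm_num

end Hgroup

section MinimalGenerators

variable {p : ℕ}

def minimalGenerators (p : ℕ) : Set (Equiv.Perm (ZMod (2 * p) × ZMod 4)) :=
  {muSq (2 * p) 4, muPow (2 * p) 4 p, nuSq (2 * p) 4, muPowNuSq (2 * p) 4 p}

lemma exists_mem_minimalGenerators_of_affine_one_one_zero_mem (hp : p.Prime)
    {N : Subgroup (Equiv.Perm (ZMod (2 * p) × ZMod 4))} {a : ZMod (2 * p)} (ha : a ≠ 0)
    (h : affine 1 1 a 0 ∈ N) : ∃ x ∈ minimalGenerators p, x ∈ N := by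
  obtain ⟨u, hu | hu⟩ := ZMod.exists_nsmul_eq_two_or_eq_prime hp ha <;>
  · have hpow := pow_mem h u
    rw [affine_one_one_pow, hu, nsmul_zero] at hpow
    refine ⟨_, ?_, hpow⟩
    simp [minimalGenerators, muSq_eq_affine, muPow_eq_affine]

lemma exists_mem_minimalGenerators_of_affine_one_one_two_mem (hp : p.Prime)
    {N : Subgroup (Equiv.Perm (ZMod (2 * p) × ZMod 4))} {a : ZMod (2 * p)}
    (h : affine 1 1 a 2 ∈ N) : ∃ x ∈ minimalGenerators p, x ∈ N := by
  have : NeZero p := ⟨hp.ne_zero⟩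
  by_cases ha : a + a = 0
  · rcases ZMod.eq_zero_or_eq_of_add_self_eq_zero ha with rfl | rfl
    · exact ⟨_, by simp [minimalGenerators, nuSq_eq_affine], h⟩
    · exact ⟨_, by simp [minimalGenerators, muPowNuSq_eq_affine], h⟩
  · have hsq := pow_mem h 2
    rw [affine_one_one_pow, two_nsmul, two_nsmul, show (2 : ZMod 4) + 2 = 0 by decide] at hsq
    exact exists_mem_minimalGenerators_of_affine_one_one_zero_mem hp ha hsq

lemma exists_mem_minimalGenerators_of_affine_one_one_mem (hp : p.Prime)
    {N : Subgroup (Equiv.Perm (ZMod (2 * p) × ZMod 4))} {a : ZMod (2 * p)} {b : ZMod 4}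
    (hab : a ≠ 0 ∨ b ≠ 0) (h : affine 1 1 a b ∈ N) : ∃ x ∈ minimalGenerators p, x ∈ N := by
  have zmod4_cases : ∀ b : ZMod 4, b = 0 ∨ b = 2 ∨ b + b = 2 := by decide
  rcases zmod4_cases b with rfl | rfl | hb
  · exact exists_mem_minimalGenerators_of_affine_one_one_zero_mem hp (by simpa using hab) h
  · exact exists_mem_minimalGenerators_of_affine_one_one_two_mem hp h
  · have hsq := pow_mem h 2
    rw [affine_one_one_pow, two_nsmul, two_nsmul, hb] at hsq
    exact exists_mem_minimalGenerators_of_affine_one_one_two_mem hp hsq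

lemma exists_mem_minimalGenerators_of_normalIn (hp : p.Prime)
    {N : Subgroup (Equiv.Perm (ZMod (2 * p) × ZMod 4))} (hN : NormalIn N (Hgroup (2 * p) 4))
    (hbot : N ≠ ⊥) : ∃ x ∈ minimalGenerators p, x ∈ N := by
  obtain ⟨a, b, hab, h⟩ :=
    exists_affine_one_one_mem_of_normalIn (ZMod.two_ne_zero_of_prime hp) (by decide) hN hbot
  exact exists_mem_minimalGenerators_of_affine_one_one_mem hp hab h

lemma minimalGenerators_subset_Hgroup : minimalGenerators p ⊆ Hgroup (2 * p) 4 := by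
  rintro x (rfl | rfl | rfl | rfl)
  exacts [muSq_mem_Hgroup, muPow_mem_Hgroup p, nuSq_mem_Hgroup, muPowNuSq_mem_Hgroup p]

lemma normalIn_closure_of_mem_minimalGenerators {x : Equiv.Perm (ZMod (2 * p) × ZMod 4)}
    (hx : x ∈ minimalGenerators p) : NormalIn (Subgroup.closure {x}) (Hgroup (2 * p) 4) := by
  refine normalIn_closure_singleton (minimalGenerators_subset_Hgroup hx) fun g hg => ?_
  obtain ⟨a, b, rfl, hb⟩ : ∃ a b, x = affine 1 1 a b ∧ -b = b := by
    rcases hx with rfl | rfl | rfl | rfl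
    · exact ⟨_, _, muSq_eq_affine, neg_zero⟩
    · exact ⟨_, _, muPow_eq_affine p, neg_zero⟩
    · exact ⟨_, _, nuSq_eq_affine, by decide⟩
    · exact ⟨_, _, muPowNuSq_eq_affine p, by decide⟩
  exact conj_affine_one_one_eq_or_eq_inv (Hgroup_le_affineSubgroup hg) hb

lemma orderOf_prime_of_mem_minimalGenerators (hp : p.Prime)
    {x : Equiv.Perm (ZMod (2 * p) × ZMod 4)} (hx : x ∈ minimalGenerators p) :
    (orderOf x).Prime := by
  have h2 : (2 : ZMod 4) ≠ 0 := by decide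
  have h4 : 2 • (2 : ZMod 4) = 0 := by decide
  rcases hx with rfl | rfl | rfl | rfl
  · rw [muSq_eq_affine, orderOf_affine_one_one_eq_prime hp ZMod.prime_nsmul_two (nsmul_zero p)
      (Or.inl (ZMod.two_ne_zero_of_prime hp))]
    exact hp
  · rw [muPow_eq_affine, orderOf_affine_one_one_eq_prime Nat.prime_two ZMod.two_nsmul_prime
      (nsmul_zero 2) (Or.inl (ZMod.natCast_ne_zero_of_prime hp))]
    exact Nat.prime_two
  · rw [nuSq_eq_affine, orderOf_affine_one_one_eq_prime Nat.prime_two (nsmul_zero 2) h4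
      (Or.inr h2)]
    exact Nat.prime_two
  · rw [muPowNuSq_eq_affine, orderOf_affine_one_one_eq_prime Nat.prime_two ZMod.two_nsmul_prime h4
      (Or.inr h2)]
    exact Nat.prime_two

end MinimalGenerators

theorem stmt17_general (p : ℕ) (hp : p.Prime)
    (M : Subgroup (Equiv.Perm (ZMod (2 * p) × ZMod 4))) :
    IsMinimalNormalIn M (Hgroup (2 * p) 4) ↔
      (M = Subgroup.closure {muSq (2 * p) 4} ∨
        M = Subgroup.closure {muPow (2 * p) 4 p} ∨
        M = Subgroup.closure {nuSq (2 * p) 4} ∨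
        M = Subgroup.closure {muPowNuSq (2 * p) 4 p}) := by
  suffices IsMinimalNormalIn M (Hgroup (2 * p) 4) ↔
      ∃ x ∈ minimalGenerators p, M = Subgroup.closure {x} by
    simpa [minimalGenerators] using this
  constructor
  · intro hM
    obtain ⟨x, hx, hxM⟩ := exists_mem_minimalGenerators_of_normalIn hp hM.1 hM.2.1
    refine ⟨x, hx, hM.eq_closure_singleton hxM ?_ (normalIn_closure_of_mem_minimalGenerators hx)⟩
    exact fun h => (orderOf_prime_of_mem_minimalGenerators hp hx).ne_one (orderOf_eq_one_iff.mpr h)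
  · rintro ⟨x, hx, rfl⟩
    exact isMinimalNormalIn_closure_singleton (orderOf_prime_of_mem_minimalGenerators hp hx)
      (normalIn_closure_of_mem_minimalGenerators hx)

/-- the minimal normal subgroups of `H(2p,4)` are exactly `⟨μ²⟩`, `⟨μ^p⟩`,
`⟨ν²⟩` and `⟨μ^p ν²⟩`. -/
theorem stmt17 (p : ℕ) (hp : p.Prime) (hpo : Odd p)
    (M : Subgroup (Equiv.Perm (ZMod (2 * p) × ZMod 4))) :
    IsMinimalNormalIn M (Hgroup (2 * p) 4) ↔
      (M = Subgroup.closure {muSq (2 * p) 4} ∨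
        M = Subgroup.closure {muPow (2 * p) 4 p} ∨
        M = Subgroup.closure {nuSq (2 * p) 4} ∨
        M = Subgroup.closure {muPowNuSq (2 * p) 4 p}) :=
  stmt17_general p hp M

end OG4
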